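/- arXiv:0801.1195 — 3 statements merged into one kernel-verified Lean document; each statement's English description precedes it below -/
import Mathlib

section
/- Let x = (x_∞, x₂, x₃) ∈ F and let d ∈ {0,1} satisfy x₂ − d ∈ 2ℤ₂. Then the point u = ({(3/2)(x_∞ + d)}, (3/2)(x₂ + d) − ⌊(3/2)(x_∞ + d)⌋, (3/2)(x₃ + d) − ⌊(3/2)(x_∞ + d)⌋) lies in F and (3/2)·x − u ∈ Γ; that is, u is the unique representative in F of (3/2)x modulo Γ (the explicit formula for α^{(−1,1)}, multiplication by 3/2, on X = G/Γ ≅ F). -/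
/-!
Subtracting `Δ(n - 3d/2) ∈ Γ`, with `n = ⌊(3/2)(x_∞ + d)⌋`, from `(3/2)x` leaves `u`. Its real
coordinate is a fractional part; its 2-adic coordinate is `3z + 3d - n` where `x₂ = 2z + d`, and
its 3-adic coordinate is integral because `2` is a 3-adic unit. Uniqueness: two representatives
in `F` differ by `Δ q` with `q ∈ ℤ[1/6]` integral at `2` and `3`, hence `q ∈ ℤ`, and `|q| < 1`.
-/

open Set

noncomputable section

/-- The ambient group `G = ℝ × ℚ₂ × ℚ₃`. -/
abbrev G : Type := ℝ × ℚ_[2] × ℚ_[3]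

/-- The diagonal embedding of `ℚ` into `G`. -/
def Δ (r : ℚ) : G := ((r : ℝ), (r : ℚ_[2]), (r : ℚ_[3]))

/-- `ℤ[1/6]`, the rationals expressible with denominator `6^k`. -/
def zInv6 : Set ℚ := {q | ∃ (z : ℤ) (k : ℕ), q = z / 6 ^ k}

/-- `Γ = Δ(ℤ[1/6])`. -/
def Γ : Set G := Δ '' zInv6

/-- The fundamental domain `F = [0,1) × ℤ₂ × ℤ₃`. -/
def F : Set G := {x | x.1 ∈ Set.Ico (0 : ℝ) 1 ∧ ‖x.2.1‖ ≤ 1 ∧ ‖x.2.2‖ ≤ 1}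

/-- Coordinatewise multiplication by a rational on `G`. -/
def act (q : ℚ) (x : G) : G :=
  ((q : ℝ) * x.1, (q : ℚ_[2]) * x.2.1, (q : ℚ_[3]) * x.2.2)

lemma Δ_sub (a b : ℚ) : Δ (a - b) = Δ a - Δ b := by
  simp only [Δ, Rat.cast_sub, Prod.mk_sub_mk]

lemma sub_mem_zInv6 {a b : ℚ} (ha : a ∈ zInv6) (hb : b ∈ zInv6) : a - b ∈ zInv6 := by
  obtain ⟨z₁, k₁, rfl⟩ := ha
  obtain ⟨z₂, k₂, rfl⟩ := hb
  exact ⟨z₁ * 6 ^ k₂ - z₂ * 6 ^ k₁, k₁ + k₂, by push_cast; field_simp; ring⟩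

lemma not_dvd_den_of_norm_le_one {p : ℕ} [Fact p.Prime] {q : ℚ} (h : ‖(q : ℚ_[p])‖ ≤ 1) :
    ¬p ∣ q.den :=
  Rat.padicValuation_le_one_iff.mp ((Padic.norm_rat_le_one_iff_padicValuation_le_one p).mp h)

lemma den_eq_one_of_mem_zInv6 {q : ℚ} (hq : q ∈ zInv6) (h₂ : ‖(q : ℚ_[2])‖ ≤ 1)
    (h₃ : ‖(q : ℚ_[3])‖ ≤ 1) : q.den = 1 := by
  obtain ⟨z, k, rfl⟩ := hq
  have hden : (z / 6 ^ k : ℚ).den ∣ 6 ^ k := by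
    have := Rat.den_dvd z (6 ^ k)
    rw [Rat.divInt_eq_div] at this
    exact_mod_cast this
  have hcop : (z / 6 ^ k : ℚ).den.Coprime 6 :=
    have : Fact (Nat.Prime 3) := ⟨Nat.prime_three⟩
    Nat.Coprime.mul_right
      ((Nat.Prime.coprime_iff_not_dvd Nat.prime_two).mpr (not_dvd_den_of_norm_le_one h₂)).symm
      ((Nat.Prime.coprime_iff_not_dvd Nat.prime_three).mpr (not_dvd_den_of_norm_le_one h₃)).symm
  exact (hcop.pow_right k).eq_one_of_dvd hden

lemma eq_zero_of_mem_zInv6 {q : ℚ} (hq : q ∈ zInv6) (h₂ : ‖(q : ℚ_[2])‖ ≤ 1)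
    (h₃ : ‖(q : ℚ_[3])‖ ≤ 1) (h : |(q : ℝ)| < 1) : q = 0 := by
  rw [← Rat.coe_int_num_of_den_eq_one (den_eq_one_of_mem_zInv6 hq h₂ h₃)] at h ⊢
  rw [Rat.cast_intCast, ← Int.cast_abs, ← Int.cast_one, Int.cast_lt, Int.abs_lt_one_iff] at h
  rw [h, Int.cast_zero]

lemma eq_of_sub_mem_Γ {w u v : G} (hu : u ∈ F) (hv : v ∈ F) (hwu : w - u ∈ Γ)
    (hwv : w - v ∈ Γ) : v = u := by
  obtain ⟨a, ha, hau⟩ := hwu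
  obtain ⟨b, hb, hbv⟩ := hwv
  have hvu : v - u = Δ (a - b) := by rw [Δ_sub, hau, hbv]; abel
  have hab : a - b = 0 := by
    simp only [Δ, Prod.ext_iff, Prod.fst_sub, Prod.snd_sub] at hvu
    obtain ⟨h₁, h₂, h₃⟩ := hvu
    refine eq_zero_of_mem_zInv6 (sub_mem_zInv6 ha hb) ?_ ?_ ?_
    · rw [← h₂, ← PadicInt.mem_subring_iff]
      exact sub_mem ((PadicInt.mem_subring_iff _).mpr hv.2.1)
        ((PadicInt.mem_subring_iff _).mpr hu.2.1)
    · rw [← h₃, ← PadicInt.mem_subring_iff]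
      exact sub_mem ((PadicInt.mem_subring_iff _).mpr hv.2.2)
        ((PadicInt.mem_subring_iff _).mpr hu.2.2)
    · rw [← h₁, abs_lt]
      constructor <;> linarith [hu.1.1, hu.1.2, hv.1.1, hv.1.2]
  rw [← sub_eq_zero, hvu, hab, Δ]
  simp

section

variable {p : ℕ} [Fact p.Prime]

lemma norm_three_halves_mul_add_sub_le_one_of_sub_eq_two_mul {x z : ℚ_[p]} {d : ℤ}
    (hz : ‖z‖ ≤ 1) (hxz : x - d = 2 * z) (n : ℤ) : ‖(3 / 2) * (x + d) - n‖ ≤ 1 := by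
  have hx : (3 / 2) * (x + d) - n = 3 * z + ((3 * d - n : ℤ) : ℚ_[p]) := by
    rw [show x = 2 * z + d by linear_combination hxz]
    push_cast
    ring
  rw [hx, ← PadicInt.mem_subring_iff]
  exact add_mem (mul_mem (natCast_mem _ 3) ((PadicInt.mem_subring_iff _).mpr hz))
    (intCast_mem _ _)

lemma norm_three_halves_mul_add_sub_le_one (hp : p ≠ 2) {x : ℚ_[p]} (hx : ‖x‖ ≤ 1) (d n : ℤ) :
    ‖(3 / 2) * (x + d) - n‖ ≤ 1 := by
  have h : ‖((3 / 2 : ℚ) : ℚ_[p])‖ ≤ 1 := by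
    refine Padic.norm_rat_le_one ?_
    rw [show (3 / 2 : ℚ).den = 2 by norm_num, Nat.prime_dvd_prime_iff_eq Fact.out Nat.prime_two]
    exact hp
  rw [Rat.cast_div, Rat.cast_ofNat, Rat.cast_ofNat, ← PadicInt.mem_subring_iff] at h
  rw [← PadicInt.mem_subring_iff]
  exact sub_mem (mul_mem h (add_mem ((PadicInt.mem_subring_iff _).mpr hx) (intCast_mem _ _)))
    (intCast_mem _ _)

end

theorem times_three_halves_formula_general (x : G) (hx : x ∈ F) (d : ℤ)
    (hdig : ∃ z : ℚ_[2], ‖z‖ ≤ 1 ∧ x.2.1 - (d : ℚ_[2]) = 2 * z) :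
    ∀ u : G,
      u = (Int.fract ((3 / 2) * (x.1 + (d : ℝ))),
           (3 / 2 : ℚ_[2]) * (x.2.1 + (d : ℚ_[2]))
             - ((⌊(3 / 2) * (x.1 + (d : ℝ))⌋ : ℤ) : ℚ_[2]),
           (3 / 2 : ℚ_[3]) * (x.2.2 + (d : ℚ_[3]))
             - ((⌊(3 / 2) * (x.1 + (d : ℝ))⌋ : ℤ) : ℚ_[3])) →
      u ∈ F ∧ act (3/2) x - u ∈ Γ ∧ ∀ v ∈ F, act (3/2) x - v ∈ Γ → v = u := by
  set n : ℤ := ⌊(3 / 2) * (x.1 + (d : ℝ))⌋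
  intro u hu_def
  obtain ⟨z, hz, hxz⟩ := hdig
  have hu : u ∈ F := by
    rw [hu_def]
    exact ⟨⟨Int.fract_nonneg _, Int.fract_lt_one _⟩,
      norm_three_halves_mul_add_sub_le_one_of_sub_eq_two_mul hz hxz n,
      norm_three_halves_mul_add_sub_le_one (by norm_num) hx.2.2 d n⟩
  have hact : act (3/2) x - u = Δ (n - 3 / 2 * d) := by
    simp only [hu_def, Δ, act, Int.fract, Prod.mk_sub_mk, Prod.mk.injEq]
    push_cast
    refine ⟨?_, ?_, ?_⟩ <;> ring
  have hmem : act (3/2) x - u ∈ Γ := ⟨_, ⟨3 * (2 * n - 3 * d), 1, by push_cast; ring⟩, hact.symm⟩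
  exact ⟨hu, hmem, fun v hv hvΓ => eq_of_sub_mem_Γ hu hv hmem hvΓ⟩

/-- The explicit formula for `α^{(-1,1)}` (multiplication by `3/2`) on `X = G/Γ ≅ F`:
if `d ∈ {0,1}` satisfies `x₂ - d ∈ 2ℤ₂`, then
`u = ({(3/2)(x_∞+d)}, (3/2)(x₂+d) - ⌊(3/2)(x_∞+d)⌋, (3/2)(x₃+d) - ⌊(3/2)(x_∞+d)⌋)`
lies in `F` and is the unique representative of `(3/2)x` modulo `Γ`. -/
theorem times_three_halves_formula (x : G) (hx : x ∈ F) (d : ℤ) (hd : d = 0 ∨ d = 1)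
    (hdig : ∃ z : ℚ_[2], ‖z‖ ≤ 1 ∧ x.2.1 - (d : ℚ_[2]) = 2 * z) :
    ∀ u : G,
      u = (Int.fract ((3 / 2) * (x.1 + (d : ℝ))),
           (3 / 2 : ℚ_[2]) * (x.2.1 + (d : ℚ_[2]))
             - ((⌊(3 / 2) * (x.1 + (d : ℝ))⌋ : ℤ) : ℚ_[2]),
           (3 / 2 : ℚ_[3]) * (x.2.2 + (d : ℚ_[3]))
             - ((⌊(3 / 2) * (x.1 + (d : ℝ))⌋ : ℤ) : ℚ_[3])) →
      u ∈ F ∧ act (3/2) x - u ∈ Γ ∧ ∀ v ∈ F, act (3/2) x - v ∈ Γ → v = u :=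
  times_three_halves_formula_general x hx d hdig
end
end

section
/- Let a, b ≥ 1 be integers, N = 2^a·3^b, 0 ≤ k < N, and n ≥ 1. Then {rep(N^n·y) : y ∈ A_k} = ⋃_{m=0}^{N^{n−1}−1} [0,1) × (2^{an}ℤ₂ − (kN^{n−1} + m)) × (3^{bn}ℤ₃ − (kN^{n−1} + m)), and this union is pairwise disjoint; here 2^{an}ℤ₂ − c denotes the coset {2^{an}z − c : z ∈ ℤ₂} and similarly for ℤ₃. -/
open Set

noncomputable section

/-- The atom `A_k = [k/N, (k+1)/N) × ℤ₂ × ℤ₃` of the partition `ξ`. -/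
def A (N k : ℕ) : Set G :=
  {x | x.1 ∈ Set.Ico ((k : ℝ) / N) (((k : ℝ) + 1) / N) ∧ ‖x.2.1‖ ≤ 1 ∧ ‖x.2.2‖ ≤ 1}

/-- The coset rectangle `[0,1) × (2^{an}ℤ₂ - c) × (3^{bn}ℤ₃ - c)` with offset `c`. -/
def B (a b n c : ℕ) : Set G :=
  {u | u.1 ∈ Set.Ico (0 : ℝ) 1 ∧
    (∃ z : ℚ_[2], ‖z‖ ≤ 1 ∧ u.2.1 = 2 ^ (a * n) * z - (c : ℚ_[2])) ∧
    (∃ w : ℚ_[3], ‖w‖ ≤ 1 ∧ u.2.2 = 3 ^ (b * n) * w - (c : ℚ_[3]))}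

/-! Multiplication by `N^n` maps `A_k` onto the box
`[kN^{n-1}, (k+1)N^{n-1}) × 2^{an}ℤ₂ × 3^{bn}ℤ₃`, because `3` is a unit of `ℤ₂` and `2` a unit
of `ℤ₃`. A point `x` of the box with `c = ⌊x.1⌋` reduces to `x - Δ c`, which lies in the rectangle
with offset `c` and hence in `F`; it is `rep x` because `F` meets each coset of `Γ` only once (an
element of `ℤ[1/6]` that is integral at `2` and at `3` is an integer, and the only integer in
`(-1, 1)` is `0`). Two rectangles with offsets `c, c'` meet only if `2^{an}3^{bn} ∣ c - c'`, which
is impossible for distinct offsets in a window of length `N^{n-1}`. -/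

lemma Padic.norm_natCast_prime_pow_mul {p : ℕ} [Fact p.Prime] (e : ℕ) {m : ℕ}
    (hm : p.Coprime m) : ‖((p ^ e * m : ℕ) : ℚ_[p])‖ = (p : ℝ) ^ (-e : ℤ) := by
  rw [Nat.cast_mul, norm_mul, Nat.cast_pow, Padic.norm_p_pow,
    Padic.norm_natCast_eq_one_iff.mpr hm, mul_one]

lemma Padic.exists_pow_mul_sub_iff {p : ℕ} [Fact p.Prime] (e : ℕ) (x c : ℚ_[p]) :
    (∃ z : ℚ_[p], ‖z‖ ≤ 1 ∧ x = (p : ℚ_[p]) ^ e * z - c) ↔ ‖x + c‖ ≤ (p : ℝ) ^ (-e : ℤ) := by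
  have hp : (p : ℚ_[p]) ^ e ≠ 0 := pow_ne_zero _ (Nat.cast_ne_zero.mpr (Fact.out : p.Prime).ne_zero)
  have hnorm : 0 < (p : ℝ) ^ (-e : ℤ) := zpow_pos (Nat.cast_pos.mpr (Fact.out : p.Prime).pos) _
  constructor
  · rintro ⟨z, hz, rfl⟩
    rw [sub_add_cancel, norm_mul, Padic.norm_p_pow]
    exact mul_le_of_le_one_right hnorm.le hz
  · intro h
    refine ⟨((p : ℚ_[p]) ^ e)⁻¹ * (x + c), ?_, by field_simp; ring⟩
    rw [norm_mul, norm_inv, Padic.norm_p_pow]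
    exact inv_mul_le_one_of_le₀ h hnorm.le

lemma Padic.norm_sub_le_of_le {p : ℕ} [Fact p.Prime] {x y : ℚ_[p]} {r : ℝ} (hx : ‖x‖ ≤ r)
    (hy : ‖y‖ ≤ r) : ‖x - y‖ ≤ r := by
  rw [sub_eq_add_neg]
  exact (Padic.nonarchimedean x (-y)).trans (max_le hx (by rwa [norm_neg]))

lemma natPow_eq_two_pow_mul_three_pow {a b N : ℕ} (hN : N = 2 ^ a * 3 ^ b) (n : ℕ) :
    N ^ n = 2 ^ (a * n) * 3 ^ (b * n) := by
  rw [hN, mul_pow, pow_mul, pow_mul]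

lemma norm_ratCast_natPow_two {a b N : ℕ} (hN : N = 2 ^ a * 3 ^ b) (n : ℕ) :
    ‖(((N : ℚ) ^ n : ℚ) : ℚ_[2])‖ = (2 : ℝ) ^ (-(a * n : ℕ) : ℤ) := by
  have h := Padic.norm_natCast_prime_pow_mul (p := 2) (a * n)
    (m := 3 ^ (b * n)) (Nat.Coprime.pow_right _ (by norm_num))
  rw [← natPow_eq_two_pow_mul_three_pow hN] at h
  exact_mod_cast h

lemma norm_ratCast_natPow_three {a b N : ℕ} (hN : N = 2 ^ a * 3 ^ b) (n : ℕ) :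
    ‖(((N : ℚ) ^ n : ℚ) : ℚ_[3])‖ = (3 : ℝ) ^ (-(b * n : ℕ) : ℤ) := by
  have h := Padic.norm_natCast_prime_pow_mul (p := 3) (b * n)
    (m := 2 ^ (a * n)) (Nat.Coprime.pow_right _ (by norm_num))
  rw [mul_comm, ← natPow_eq_two_pow_mul_three_pow hN] at h
  exact_mod_cast h

lemma two_pow_mul_three_pow_dvd {z : ℤ} {e f : ℕ} (h2 : ‖(z : ℚ_[2])‖ ≤ (2 : ℝ) ^ (-e : ℤ))
    (h3 : ‖(z : ℚ_[3])‖ ≤ (3 : ℝ) ^ (-f : ℤ)) : 2 ^ e * 3 ^ f ∣ z :=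
  IsCoprime.mul_dvd (IsCoprime.pow (Int.isCoprime_iff_gcd_eq_one.mpr rfl))
    ((Padic.norm_int_le_pow_iff_dvd z e).mp (by exact_mod_cast h2))
    ((Padic.norm_int_le_pow_iff_dvd z f).mp (by exact_mod_cast h3))

lemma mem_B_iff {a b n c : ℕ} {u : G} :
    u ∈ B a b n c ↔ u.1 ∈ Ico (0 : ℝ) 1 ∧ ‖u.2.1 + c‖ ≤ (2 : ℝ) ^ (-(a * n : ℕ) : ℤ) ∧
      ‖u.2.2 + c‖ ≤ (3 : ℝ) ^ (-(b * n : ℕ) : ℤ) := by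
  have h2 := Padic.exists_pow_mul_sub_iff (p := 2) (a * n) u.2.1 c
  have h3 := Padic.exists_pow_mul_sub_iff (p := 3) (b * n) u.2.2 c
  simp only [Nat.cast_ofNat] at h2 h3
  rw [B, mem_ofPred_eq, h2, h3]

lemma B_subset_F (a b n c : ℕ) : B a b n c ⊆ F := by
  intro u hu
  obtain ⟨hu1, hu2, hu3⟩ := mem_B_iff.mp hu
  have hc (p : ℕ) [Fact p.Prime] : ‖(c : ℚ_[p])‖ ≤ 1 := by
    simpa using Padic.norm_int_le_one (p := p) c
  refine ⟨hu1, ?_, ?_⟩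
  · simpa using Padic.norm_sub_le_of_le
      (hu2.trans (zpow_le_one_of_nonpos₀ (by norm_num) (by omega))) (hc 2)
  · simpa using Padic.norm_sub_le_of_le
      (hu3.trans (zpow_le_one_of_nonpos₀ (by norm_num) (by omega))) (hc 3)

lemma modEq_of_mem_B {a b n c c' : ℕ} {u : G} (hc : u ∈ B a b n c) (hc' : u ∈ B a b n c') :
    c ≡ c' [MOD 2 ^ (a * n) * 3 ^ (b * n)] := by
  obtain ⟨-, hc2, hc3⟩ := mem_B_iff.mp hc
  obtain ⟨-, hc2', hc3'⟩ := mem_B_iff.mp hc'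
  rw [Nat.modEq_iff_dvd]
  push_cast
  refine two_pow_mul_three_pow_dvd ?_ ?_
  · simpa using Padic.norm_sub_le_of_le hc2' hc2
  · simpa using Padic.norm_sub_le_of_le hc3' hc3

lemma sub_mem_Γ {x y : G} (hx : x ∈ Γ) (hy : y ∈ Γ) : x - y ∈ Γ := by
  obtain ⟨q, ⟨z, k, rfl⟩, rfl⟩ := hx
  obtain ⟨q', ⟨z', k', rfl⟩, rfl⟩ := hy
  refine ⟨z / 6 ^ k - z' / 6 ^ k', ⟨z * 6 ^ k' - z' * 6 ^ k, k + k', ?_⟩, ?_⟩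
  · push_cast
    field_simp
    ring
  · simp only [Δ, Prod.mk_sub_mk, Rat.cast_sub]

lemma Δ_natCast_mem_Γ (c : ℕ) : Δ c ∈ Γ := ⟨c, ⟨c, 0, by simp⟩, rfl⟩

lemma exists_eq_intCast_of_mem_zInv6 {q : ℚ} (hq : q ∈ zInv6) (h2 : ‖(q : ℚ_[2])‖ ≤ 1)
    (h3 : ‖(q : ℚ_[3])‖ ≤ 1) : ∃ t : ℤ, q = t := by
  obtain ⟨z, k, rfl⟩ := hq
  have h6 : (6 : ℚ) ^ k = ((2 ^ k * 3 ^ k : ℕ) : ℚ) := by push_cast; rw [← mul_pow]; norm_num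
  have hz : ∀ (p : ℕ) [Fact p.Prime], ‖(z : ℚ_[p])‖ =
      ‖(((z : ℚ) / 6 ^ k : ℚ) : ℚ_[p])‖ * ‖(((2 ^ k * 3 ^ k : ℕ) : ℚ) : ℚ_[p])‖ := by
    intro p _
    rw [← norm_mul, ← Rat.cast_mul, ← h6, div_mul_cancel₀ _ (by positivity), Rat.cast_intCast]
  have hdvd : 2 ^ k * 3 ^ k ∣ z := by
    refine two_pow_mul_three_pow_dvd ?_ ?_
    · rw [hz 2, Rat.cast_natCast, Padic.norm_natCast_prime_pow_mul (p := 2) k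
        (Nat.Coprime.pow_right _ (by norm_num))]
      exact_mod_cast mul_le_of_le_one_left (by positivity) h2
    · rw [hz 3, Rat.cast_natCast, mul_comm (2 ^ k), Padic.norm_natCast_prime_pow_mul (p := 3) k
        (Nat.Coprime.pow_right _ (by norm_num))]
      exact_mod_cast mul_le_of_le_one_left (by positivity) h3
  obtain ⟨t, rfl⟩ := hdvd
  exact ⟨t, by push_cast; rw [← mul_pow]; norm_num⟩

lemma eq_of_mem_F_of_sub_mem_Γ {u v : G} (hu : u ∈ F) (hv : v ∈ F) (h : u - v ∈ Γ) : u = v := by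
  obtain ⟨q, hq, huv⟩ := h
  have h2 : (q : ℚ_[2]) = u.2.1 - v.2.1 := congrArg (·.2.1) huv
  have h3 : (q : ℚ_[3]) = u.2.2 - v.2.2 := congrArg (·.2.2) huv
  obtain ⟨t, rfl⟩ := exists_eq_intCast_of_mem_zInv6 hq
    (h2 ▸ Padic.norm_sub_le_of_le hu.2.1 hv.2.1) (h3 ▸ Padic.norm_sub_le_of_le hu.2.2 hv.2.2)
  have ht : (t : ℝ) = u.1 - v.1 := by simpa [Δ] using congrArg Prod.fst huv
  have ht0 : t = 0 := by
    have habs : |(t : ℝ)| < 1 := by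
      rw [ht, abs_sub_lt_iff]
      constructor <;> linarith [hu.1.1, hu.1.2, hv.1.1, hv.1.2]
    exact Int.abs_lt_one_iff.mp (by exact_mod_cast habs)
  rw [← sub_eq_zero, ← huv, ht0]
  simp [Δ]

lemma mul_pow_succ_mem_Ico_iff {N : ℝ} (hN : 0 < N) (k t : ℝ) (n : ℕ) :
    N ^ (n + 1) * t ∈ Ico (k * N ^ n) ((k + 1) * N ^ n) ↔ t ∈ Ico (k / N) ((k + 1) / N) := by
  have hNn : 0 < N ^ n := pow_pos hN n
  rw [pow_succ, mul_assoc, mem_Ico, mem_Ico, mul_comm k, mul_comm (k + 1),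
    mul_le_mul_iff_right₀ hNn, mul_lt_mul_iff_right₀ hNn, div_le_iff₀ hN, lt_div_iff₀ hN,
    mul_comm t]

lemma act_natPow_mem_A_iff {a b N : ℕ} (hN : N = 2 ^ a * 3 ^ b) (k n : ℕ) (y : G) :
    y ∈ A N k ↔ (act ((N : ℚ) ^ (n + 1)) y).1 ∈ Ico ((k : ℝ) * N ^ n) (((k : ℝ) + 1) * N ^ n) ∧
      ‖(act ((N : ℚ) ^ (n + 1)) y).2.1‖ ≤ (2 : ℝ) ^ (-(a * (n + 1) : ℕ) : ℤ) ∧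
      ‖(act ((N : ℚ) ^ (n + 1)) y).2.2‖ ≤ (3 : ℝ) ^ (-(b * (n + 1) : ℕ) : ℤ) := by
  have hN0 : (0 : ℝ) < N := by rw [hN]; positivity
  rw [A, mem_ofPred_eq, act, norm_mul, norm_mul, norm_ratCast_natPow_two hN,
    norm_ratCast_natPow_three hN, mul_le_iff_le_one_right (by positivity),
    mul_le_iff_le_one_right (by positivity), Rat.cast_pow, Rat.cast_natCast,
    mul_pow_succ_mem_Ico_iff hN0]

lemma act_act_inv {q : ℚ} (hq : q ≠ 0) (x : G) : act q (act q⁻¹ x) = x := by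
  simp [act, hq]

section Representative

variable {rep : G → G} (hrep : ∀ x : G, rep x ∈ F ∧ x - rep x ∈ Γ)
include hrep

lemma rep_eq_of_sub_mem_Γ {x f : G} (hf : f ∈ F) (hxf : x - f ∈ Γ) : rep x = f :=
  eq_of_mem_F_of_sub_mem_Γ (hrep x).1 hf
    (by simpa using sub_mem_Γ hxf (hrep x).2)

lemma rep_add_Δ_of_mem_B {a b n c : ℕ} {u : G} (hu : u ∈ B a b n c) : rep (u + Δ c) = u :=
  rep_eq_of_sub_mem_Γ hrep (B_subset_F a b n c hu) (by simpa using Δ_natCast_mem_Γ c)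

lemma image_rep_act_A {a b N : ℕ} (hN : N = 2 ^ a * 3 ^ b) (k n : ℕ) :
    (fun y => rep (act ((N : ℚ) ^ (n + 1)) y)) '' A N k =
      ⋃ m ∈ Finset.range (N ^ n), B a b (n + 1) (k * N ^ n + m) := by
  ext u
  simp only [mem_image, mem_iUnion, Finset.mem_range, exists_prop]
  constructor
  · rintro ⟨y, hy, rfl⟩
    obtain ⟨hx1, hx2, hx3⟩ := (act_natPow_mem_A_iff hN k n y).mp hy
    set x := act ((N : ℚ) ^ (n + 1)) y
    set c := ⌊x.1⌋₊
    have hx0 : 0 ≤ x.1 := hx1.1.trans' (by positivity)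
    have hKc : k * N ^ n ≤ c := Nat.le_floor (by push_cast; exact hx1.1)
    have hcL : c < k * N ^ n + N ^ n :=
      (Nat.floor_lt hx0).mpr (by push_cast; linarith [hx1.2])
    have hxc : x - Δ c ∈ B a b (n + 1) c := by
      refine mem_B_iff.mpr ⟨⟨?_, ?_⟩, by simpa [Δ] using hx2, by simpa [Δ] using hx3⟩
      · simpa [Δ] using Nat.floor_le hx0
      · simpa [Δ, sub_lt_iff_lt_add'] using Nat.lt_floor_add_one x.1
    refine ⟨c - k * N ^ n, by omega, ?_⟩
    have hrep_x := rep_add_Δ_of_mem_B hrep hxc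
    rw [sub_add_cancel] at hrep_x
    rwa [Nat.add_sub_cancel' hKc, hrep_x]
  · rintro ⟨m, hm, hu⟩
    have hN0 : (N : ℚ) ^ (n + 1) ≠ 0 := pow_ne_zero _ (by rw [hN]; positivity)
    have hmN : (m : ℝ) + 1 ≤ N ^ n := by exact_mod_cast hm
    obtain ⟨⟨hu0, hu1⟩, hu2, hu3⟩ := mem_B_iff.mp hu
    refine ⟨act ((N : ℚ) ^ (n + 1))⁻¹ (u + Δ ((k * N ^ n + m : ℕ) : ℚ)), ?_, ?_⟩
    · rw [act_natPow_mem_A_iff hN k n, act_act_inv hN0]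
      refine ⟨?_, by simpa [Δ] using hu2, by simpa [Δ] using hu3⟩
      simp only [Δ, Prod.fst_add, mem_Ico]
      push_cast
      constructor <;> linarith
    · exact (congrArg rep (act_act_inv hN0 _)).trans (rep_add_Δ_of_mem_B hrep hu)

end Representative

theorem image_atom_iterate_general (rep : G → G) (hrep : ∀ x : G, rep x ∈ F ∧ x - rep x ∈ Γ)
    (a b : ℕ) (N : ℕ) (hN : N = 2 ^ a * 3 ^ b)
    (k : ℕ) (n : ℕ) (hn : 1 ≤ n) :
    ((fun y => rep (act ((N : ℚ) ^ n) y)) '' A N k =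
      ⋃ m ∈ Finset.range (N ^ (n - 1)), B a b n (k * N ^ (n - 1) + m)) ∧
    ∀ m ∈ Finset.range (N ^ (n - 1)), ∀ m' ∈ Finset.range (N ^ (n - 1)), m ≠ m' →
      Disjoint (B a b n (k * N ^ (n - 1) + m)) (B a b n (k * N ^ (n - 1) + m')) := by
  obtain ⟨n, rfl⟩ := Nat.exists_eq_add_of_le' hn
  rw [Nat.add_sub_cancel]
  refine ⟨image_rep_act_A hrep hN k n, fun m hm m' hm' hne => ?_⟩
  rw [Finset.mem_range] at hm hm'
  refine disjoint_left.mpr fun u hu hu' => hne ?_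
  have hmod := (modEq_of_mem_B hu hu').add_left_cancel' (k * N ^ n)
  have hle : N ^ n ≤ 2 ^ (a * (n + 1)) * 3 ^ (b * (n + 1)) := by
    rw [← natPow_eq_two_pow_mul_three_pow hN]
    exact Nat.pow_le_pow_right (by rw [hN]; positivity) n.le_succ
  exact hmod.eq_of_lt_of_lt (hm.trans_le hle) (hm'.trans_le hle)

/-- The image of the atom `A_k` under multiplication by `N^n` on `G/Γ`, computed in `F`,
is the disjoint union over `0 ≤ m < N^{n-1}` of the coset rectangles
`[0,1) × (2^{an}ℤ₂ - (kN^{n-1}+m)) × (3^{bn}ℤ₃ - (kN^{n-1}+m))`. -/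
theorem image_atom_iterate (rep : G → G) (hrep : ∀ x : G, rep x ∈ F ∧ x - rep x ∈ Γ)
    (a b : ℕ) (ha : 1 ≤ a) (hb : 1 ≤ b) (N : ℕ) (hN : N = 2 ^ a * 3 ^ b)
    (k : ℕ) (hk : k < N) (n : ℕ) (hn : 1 ≤ n) :
    ((fun y => rep (act ((N : ℚ) ^ n) y)) '' A N k =
      ⋃ m ∈ Finset.range (N ^ (n - 1)), B a b n (k * N ^ (n - 1) + m)) ∧
    ∀ m ∈ Finset.range (N ^ (n - 1)), ∀ m' ∈ Finset.range (N ^ (n - 1)), m ≠ m' →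
      Disjoint (B a b n (k * N ^ (n - 1) + m)) (B a b n (k * N ^ (n - 1) + m')) :=
  image_atom_iterate_general rep hrep a b N hN k n hn
end
end

section
/- Let a, b ≥ 1 be integers, N = 2^a·3^b, 0 ≤ k < N, and n ≥ 1. Then the preimage of A_k under multiplication by N^n on G/Γ, computed in F, is {x ∈ F : rep(N^n·x) ∈ A_k} = ⋃_{m=0}^{N^n − 1} [k/N^{n+1} + m/N^n, (k+1)/N^{n+1} + m/N^n) × ℤ₂ × ℤ₃, and this union is pairwise disjoint. -/
open Set

noncomputable section

/-!
Multiplication by the integer `N^n` preserves `ℤ₂ × ℤ₃`, so for `x ∈ F` the point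
`N^n • x - Δ ⌊N^n x₁⌋` lies in `F`; it is therefore `rep (N^n • x)`, because `F` meets each coset
of `Γ` only once (an element of `ℤ[1/6]` that is integral at `2` and at `3` is an integer, and
the only integer in `(-1, 1)` is `0`). Hence `rep (N^n • x) ∈ A_k` just says that the fractional
part of `N^n x₁` lies in `[k/N, (k+1)/N)`, and sorting `x₁` by `m = ⌊N^n x₁⌋` gives the intervals.
-/

lemma Padic.coprime_den_of_norm_le_one {p : ℕ} [Fact p.Prime] {q : ℚ}
    (h : ‖(q : ℚ_[p])‖ ≤ 1) : p.Coprime q.den := by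
  rw [← Padic.norm_natCast_eq_one_iff]
  simpa using PadicInt.isUnit_iff.1 (PadicInt.isUnit_den q h)

lemma exists_intCast_eq_of_mem_zInv6 {q : ℚ} (hq : q ∈ zInv6) (h2 : ‖(q : ℚ_[2])‖ ≤ 1)
    (h3 : ‖(q : ℚ_[3])‖ ≤ 1) : ∃ w : ℤ, q = w := by
  obtain ⟨z, c, rfl⟩ := hq
  have hdvd : (z / 6 ^ c : ℚ).den ∣ 6 ^ c := by
    have := Rat.den_dvd z (6 ^ c)
    rw [Rat.divInt_eq_div] at this
    exact_mod_cast this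
  have hcop : (z / 6 ^ c : ℚ).den.Coprime (6 ^ c) := by
    rw [show (6 : ℕ) = 2 * 3 from rfl, mul_pow]
    exact Nat.Coprime.mul_right
      ((Padic.coprime_den_of_norm_le_one h2).symm.pow_right c)
      ((Padic.coprime_den_of_norm_le_one h3).symm.pow_right c)
  exact ⟨_, (Rat.coe_int_num_of_den_eq_one (hcop.eq_one_of_dvd hdvd)).symm⟩

lemma intCast_mem_zInv6 (z : ℤ) : (z : ℚ) ∈ zInv6 := ⟨z, 0, by simp⟩

lemma sub_mem_zInv6_s13 {q r : ℚ} (hq : q ∈ zInv6) (hr : r ∈ zInv6) : q - r ∈ zInv6 := by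
  obtain ⟨z, c, rfl⟩ := hq
  obtain ⟨w, d, rfl⟩ := hr
  refine ⟨z * 6 ^ d - w * 6 ^ c, c + d, ?_⟩
  push_cast
  field_simp
  ring

lemma Δ_sub_s13 (q r : ℚ) : Δ (q - r) = Δ q - Δ r := by
  simp [Δ]

lemma sub_mem_Γ_s13 {u v : G} (hu : u ∈ Γ) (hv : v ∈ Γ) : u - v ∈ Γ := by
  obtain ⟨q, hq, rfl⟩ := hu
  obtain ⟨r, hr, rfl⟩ := hv
  exact ⟨q - r, sub_mem_zInv6_s13 hq hr, Δ_sub_s13 q r⟩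

lemma eq_of_mem_F_of_sub_mem_Γ_s13 {x y : G} (hx : x ∈ F) (hy : y ∈ F) (hxy : x - y ∈ Γ) :
    x = y := by
  obtain ⟨q, hq, hΔ⟩ := hxy
  obtain ⟨⟨hx₀, hx₁⟩, hx₂, hx₃⟩ := hx
  obtain ⟨⟨hy₀, hy₁⟩, hy₂, hy₃⟩ := hy
  obtain ⟨hq₁, hq₂, hq₃⟩ : (q : ℝ) = x.1 - y.1 ∧ (q : ℚ_[2]) = x.2.1 - y.2.1 ∧
      (q : ℚ_[3]) = x.2.2 - y.2.2 := by
    simpa [Δ, Prod.ext_iff] using hΔ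
  obtain ⟨w, rfl⟩ := exists_intCast_eq_of_mem_zInv6 hq
    (hq₂ ▸ (PadicInt.subring 2).sub_mem hx₂ hy₂) (hq₃ ▸ (PadicInt.subring 3).sub_mem hx₃ hy₃)
  rw [Rat.cast_intCast] at hq₁
  have hw₀ : (-1 : ℝ) < w := by linarith
  have hw₁ : (w : ℝ) < 1 := by linarith
  obtain rfl : w = 0 := by
    have : (-1 : ℤ) < w ∧ w < 1 := ⟨by exact_mod_cast hw₀, by exact_mod_cast hw₁⟩
    omega
  rw [← sub_eq_zero, ← hΔ]
  simp [Δ]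

lemma rep_eq_of_mem_F {rep : G → G} (hrep : ∀ x : G, rep x ∈ F ∧ x - rep x ∈ Γ) {z w : G}
    (hw : w ∈ F) (hzw : z - w ∈ Γ) : rep z = w :=
  eq_of_mem_F_of_sub_mem_Γ_s13 (hrep z).1 hw (by simpa using sub_mem_Γ_s13 hzw (hrep z).2)

lemma rep_eq_sub_Δ_floor {rep : G → G} (hrep : ∀ x : G, rep x ∈ F ∧ x - rep x ∈ Γ) {y : G}
    (h2 : ‖y.2.1‖ ≤ 1) (h3 : ‖y.2.2‖ ≤ 1) : rep y = y - Δ ⌊y.1⌋ := by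
  refine rep_eq_of_mem_F hrep ⟨?_, ?_, ?_⟩ ⟨_, intCast_mem_zInv6 ⌊y.1⌋, by simp⟩
  · simpa [Δ, Int.self_sub_floor] using
      (⟨Int.fract_nonneg y.1, Int.fract_lt_one y.1⟩ : Int.fract y.1 ∈ Ico 0 1)
  · simpa [Δ] using (PadicInt.subring 2).sub_mem h2 (Padic.norm_int_le_one ⌊y.1⌋)
  · simpa [Δ] using (PadicInt.subring 3).sub_mem h3 (Padic.norm_int_le_one ⌊y.1⌋)

lemma mem_A_iff_of_mem_F {N k : ℕ} {z : G} (hz : z ∈ F) :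
    z ∈ A N k ↔ z.1 ∈ Ico ((k : ℝ) / N) (((k : ℝ) + 1) / N) :=
  ⟨And.left, fun h => ⟨h, hz.2⟩⟩

lemma rep_act_natCast_mem_A_iff {rep : G → G} (hrep : ∀ x : G, rep x ∈ F ∧ x - rep x ∈ Γ)
    (M N k : ℕ) {x : G} (h2 : ‖x.2.1‖ ≤ 1) (h3 : ‖x.2.2‖ ≤ 1) :
    rep (act M x) ∈ A N k ↔ Int.fract ((M : ℝ) * x.1) ∈ Ico ((k : ℝ) / N) (((k : ℝ) + 1) / N) := by
  have hM2 : ‖(act M x).2.1‖ ≤ 1 := by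
    simpa [act] using (PadicInt.subring 2).mul_mem (natCast_mem (PadicInt.subring 2) M) h2
  have hM3 : ‖(act M x).2.2‖ ≤ 1 := by
    simpa [act] using (PadicInt.subring 3).mul_mem (natCast_mem (PadicInt.subring 3) M) h3
  rw [mem_A_iff_of_mem_F (hrep _).1, rep_eq_sub_Δ_floor hrep hM2 hM3]
  simp [act, Δ, Int.self_sub_floor]

section IntervalPartition

variable {M : ℕ} {α β t : ℝ}

lemma floor_mul_eq_of_mem_Ico (hM : 0 < M) (hα : 0 ≤ α) (hβ : β ≤ 1) {m : ℕ}
    (ht : t ∈ Ico ((α + m) / M) ((β + m) / M)) : ⌊(M : ℝ) * t⌋ = m := by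
  have hM' : (0 : ℝ) < M := by exact_mod_cast hM
  obtain ⟨h₀, h₁⟩ := ht
  rw [div_le_iff₀ hM'] at h₀
  rw [lt_div_iff₀ hM'] at h₁
  rw [Int.floor_eq_iff]
  push_cast
  constructor <;> linarith

lemma pairwise_disjoint_Ico_add_div (hM : 0 < M) (hα : 0 ≤ α) (hβ : β ≤ 1) :
    Pairwise (Function.onFun Disjoint fun m : ℕ => Ico ((α + m) / M) ((β + m) / M)) := by
  intro m m' hmm'
  refine Set.disjoint_left.2 fun t ht ht' => hmm' ?_
  have := (floor_mul_eq_of_mem_Ico hM hα hβ ht).symm.trans (floor_mul_eq_of_mem_Ico hM hα hβ ht')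
  exact_mod_cast this

lemma mem_Ico_and_fract_mul_mem_Ico_iff (hM : 0 < M) (hα : 0 ≤ α) (hβ : β ≤ 1) :
    (t ∈ Ico 0 1 ∧ Int.fract ((M : ℝ) * t) ∈ Ico α β) ↔
      ∃ m < M, t ∈ Ico ((α + m) / M) ((β + m) / M) := by
  have hM' : (0 : ℝ) < M := by exact_mod_cast hM
  constructor
  · rintro ⟨⟨ht₀, ht₁⟩, hα', hβ'⟩
    have hMt : 0 ≤ (M : ℝ) * t := by positivity
    rw [Int.fract, ← Int.natCast_floor_eq_floor hMt, Int.cast_natCast] at hα' hβ'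
    refine ⟨⌊(M : ℝ) * t⌋₊, (Nat.floor_lt hMt).2 (by nlinarith), ?_, ?_⟩
    · rw [div_le_iff₀ hM']
      linarith
    · rw [lt_div_iff₀ hM']
      linarith
  · rintro ⟨m, hm, ht⟩
    have hfract : Int.fract ((M : ℝ) * t) = M * t - m := by
      rw [Int.fract, floor_mul_eq_of_mem_Ico hM hα hβ ht, Int.cast_natCast]
    have hm' : (m : ℝ) + 1 ≤ M := by exact_mod_cast hm
    obtain ⟨h₀, h₁⟩ := ht
    rw [div_le_iff₀ hM'] at h₀
    rw [lt_div_iff₀ hM'] at h₁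
    rw [hfract]
    refine ⟨⟨?_, ?_⟩, ?_, ?_⟩ <;> nlinarith

end IntervalPartition

theorem preimage_atom_iterate_general (rep : G → G) (hrep : ∀ x : G, rep x ∈ F ∧ x - rep x ∈ Γ)
    (N : ℕ)
    (k : ℕ) (hk : k < N) (n : ℕ) :
    ({x : G | x ∈ F ∧ rep (act ((N : ℚ) ^ n) x) ∈ A N k} =
      ⋃ m ∈ Finset.range (N ^ n),
        {x : G | x.1 ∈ Set.Ico ((k : ℝ) / (N : ℝ) ^ (n + 1) + (m : ℝ) / (N : ℝ) ^ n)
            (((k : ℝ) + 1) / (N : ℝ) ^ (n + 1) + (m : ℝ) / (N : ℝ) ^ n) ∧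
          ‖x.2.1‖ ≤ 1 ∧ ‖x.2.2‖ ≤ 1}) ∧
    ∀ m ∈ Finset.range (N ^ n), ∀ m' ∈ Finset.range (N ^ n), m ≠ m' →
      Disjoint
        {x : G | x.1 ∈ Set.Ico ((k : ℝ) / (N : ℝ) ^ (n + 1) + (m : ℝ) / (N : ℝ) ^ n)
            (((k : ℝ) + 1) / (N : ℝ) ^ (n + 1) + (m : ℝ) / (N : ℝ) ^ n) ∧
          ‖x.2.1‖ ≤ 1 ∧ ‖x.2.2‖ ≤ 1}
        {x : G | x.1 ∈ Set.Ico ((k : ℝ) / (N : ℝ) ^ (n + 1) + (m' : ℝ) / (N : ℝ) ^ n)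
            (((k : ℝ) + 1) / (N : ℝ) ^ (n + 1) + (m' : ℝ) / (N : ℝ) ^ n) ∧
          ‖x.2.1‖ ≤ 1 ∧ ‖x.2.2‖ ≤ 1} := by
  have hN : 0 < N := by omega
  have hM : 0 < N ^ n := pow_pos hN n
  have hα : (0 : ℝ) ≤ k / N := by positivity
  have hβ : ((k : ℝ) + 1) / N ≤ 1 := div_le_one_of_le₀ (by exact_mod_cast hk) (Nat.cast_nonneg N)
  have hends : ∀ (s : ℝ) (m : ℕ),
      s / (N : ℝ) ^ (n + 1) + m / (N : ℝ) ^ n = (s / N + m) / ((N ^ n : ℕ) : ℝ) := by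
    intro s m
    have : (N : ℝ) ≠ 0 := by positivity
    push_cast
    field_simp
    ring
  rw [show (N : ℚ) ^ n = ((N ^ n : ℕ) : ℚ) by push_cast; rfl]
  simp only [hends, Finset.mem_range]
  refine ⟨?_, fun m _ m' _ hmm' =>
    ((pairwise_disjoint_Ico_add_div hM hα hβ hmm').preimage Prod.fst).mono
      (fun _ hx => hx.1) (fun _ hx => hx.1)⟩
  ext x
  simp only [mem_ofPred_eq, mem_iUnion, exists_prop, F]
  constructor
  · rintro ⟨⟨hx₁, hx₂, hx₃⟩, hA⟩
    rw [rep_act_natCast_mem_A_iff hrep _ _ _ hx₂ hx₃] at hA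
    obtain ⟨m, hm, ht⟩ := (mem_Ico_and_fract_mul_mem_Ico_iff hM hα hβ).1 ⟨hx₁, hA⟩
    exact ⟨m, hm, ht, hx₂, hx₃⟩
  · rintro ⟨m, hm, ht, hx₂, hx₃⟩
    obtain ⟨hx₁, hA⟩ := (mem_Ico_and_fract_mul_mem_Ico_iff hM hα hβ).2 ⟨m, hm, ht⟩
    exact ⟨⟨hx₁, hx₂, hx₃⟩, (rep_act_natCast_mem_A_iff hrep _ _ _ hx₂ hx₃).2 hA⟩

/-- The preimage of the atom `A_k` under multiplication by `N^n` on `G/Γ`, computed in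
`F`, is the disjoint union over `0 ≤ m < N^n` of the rectangles
`[k/N^{n+1} + m/N^n, (k+1)/N^{n+1} + m/N^n) × ℤ₂ × ℤ₃`. -/
theorem preimage_atom_iterate (rep : G → G) (hrep : ∀ x : G, rep x ∈ F ∧ x - rep x ∈ Γ)
    (a b : ℕ) (ha : 1 ≤ a) (hb : 1 ≤ b) (N : ℕ) (hN : N = 2 ^ a * 3 ^ b)
    (k : ℕ) (hk : k < N) (n : ℕ) (hn : 1 ≤ n) :
    ({x : G | x ∈ F ∧ rep (act ((N : ℚ) ^ n) x) ∈ A N k} =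
      ⋃ m ∈ Finset.range (N ^ n),
        {x : G | x.1 ∈ Set.Ico ((k : ℝ) / (N : ℝ) ^ (n + 1) + (m : ℝ) / (N : ℝ) ^ n)
            (((k : ℝ) + 1) / (N : ℝ) ^ (n + 1) + (m : ℝ) / (N : ℝ) ^ n) ∧
          ‖x.2.1‖ ≤ 1 ∧ ‖x.2.2‖ ≤ 1}) ∧
    ∀ m ∈ Finset.range (N ^ n), ∀ m' ∈ Finset.range (N ^ n), m ≠ m' →
      Disjoint
        {x : G | x.1 ∈ Set.Ico ((k : ℝ) / (N : ℝ) ^ (n + 1) + (m : ℝ) / (N : ℝ) ^ n)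
            (((k : ℝ) + 1) / (N : ℝ) ^ (n + 1) + (m : ℝ) / (N : ℝ) ^ n) ∧
          ‖x.2.1‖ ≤ 1 ∧ ‖x.2.2‖ ≤ 1}
        {x : G | x.1 ∈ Set.Ico ((k : ℝ) / (N : ℝ) ^ (n + 1) + (m' : ℝ) / (N : ℝ) ^ n)
            (((k : ℝ) + 1) / (N : ℝ) ^ (n + 1) + (m' : ℝ) / (N : ℝ) ^ n) ∧
          ‖x.2.1‖ ≤ 1 ∧ ‖x.2.2‖ ≤ 1} :=
  preimage_atom_iterate_general rep hrep N k hk n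
end
end
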